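/- arXiv:1802.10116 — 6 statements merged into one kernel-verified Lean document; each statement's English description precedes it below -/
import Mathlib

section
/- Let n ≥ 1 and q be natural numbers with q ≤ ⌈n/2⌉ - 1. Let s : Fin n → ℝ be a sequence of n real values, of which at least n - q belong to a nonempty finite set U of 'correct' values u_1, …, u_{n-q}. Then the median m of the sequence s (i.e., the value at position ⌊(n-1)/2⌋ and/or ⌈(n-1)/2⌉ of the sorted sequence; for odd n, the middle element) satisfies min_i u_i ≤ m ≤ max_i u_i. -/
/-- The element at sorted position `k` of the sequence `s` (0 if out of range). -/
noncomputable def seqSorted {n : ℕ} (s : Fin n → ℝ) (k : ℕ) : ℝ :=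
  if h : k < n then s (Tuple.sort s ⟨k, h⟩) else 0

/-!
Only the entries outside `C` can lie strictly below `min C` (or strictly above `max C`),
and there are at most `n - #C ≤ q` of them. The `k + 1` smallest entries are at most the
`k`-th sorted value, and the `n - k` largest are at least it, so a sorted position `k` with
`n - #C ≤ k < #C` is squeezed between `min C` and `max C`. Both middle positions of the
sorted sequence qualify as soon as `q ≤ ⌈n/2⌉ - 1`.
-/

open Finset

section SortedPositions

variable {α : Type*} [LinearOrder α] {n : ℕ} (s : Fin n → α)

lemma le_sort_of_card_filter_lt_le {a : α} {k : Fin n} (h : #{i | s i < a} ≤ k) :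
    a ≤ s (Tuple.sort s k) := by
  by_contra! hlt
  have hsub : (Iic k).image (Tuple.sort s) ⊆ ({i | s i < a} : Finset _) := by
    simp only [subset_iff, mem_image, mem_Iic, mem_filter, mem_univ, true_and]
    rintro _ ⟨j, hjk, rfl⟩
    exact (Tuple.monotone_sort s hjk).trans_lt hlt
  have := card_le_card hsub
  rw [card_image_of_injective _ (Tuple.sort s).injective, Fin.card_Iic] at this
  omega

lemma sort_le_of_card_filter_gt_lt {a : α} {k : Fin n} (h : #{i | a < s i} < n - k) :
    s (Tuple.sort s k) ≤ a := by
  by_contra! hlt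
  have hsub : (Ici k).image (Tuple.sort s) ⊆ ({i | a < s i} : Finset _) := by
    simp only [subset_iff, mem_image, mem_Ici, mem_filter, mem_univ, true_and]
    rintro _ ⟨j, hkj, rfl⟩
    exact hlt.trans_le (Tuple.monotone_sort s hkj)
  have := card_le_card hsub
  rw [card_image_of_injective _ (Tuple.sort s).injective, Fin.card_Ici] at this
  omega

lemma card_filter_le_card_compl {p : Fin n → Prop} [DecidablePred p] {C : Finset (Fin n)}
    (hC : ∀ i ∈ C, ¬ p i) : #{i | p i} ≤ n - #C := by
  calc #{i | p i} ≤ #Cᶜ :=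
        card_le_card fun i hi => mem_compl.2 fun hiC => hC i hiC (mem_filter.1 hi).2
    _ = n - #C := by rw [card_compl, Fintype.card_fin]

lemma inf'_le_sort {C : Finset (Fin n)} (hC : C.Nonempty) {k : Fin n} (hk : n - #C ≤ k) :
    C.inf' hC s ≤ s (Tuple.sort s k) :=
  le_sort_of_card_filter_lt_le s <|
    (card_filter_le_card_compl fun _ hi => not_lt.2 (inf'_le s hi)).trans hk

lemma sort_le_sup' {C : Finset (Fin n)} (hC : C.Nonempty) {k : Fin n} (hk : (k : ℕ) < #C) :
    s (Tuple.sort s k) ≤ C.sup' hC s := by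
  refine sort_le_of_card_filter_gt_lt s <|
    (card_filter_le_card_compl fun _ hi => not_lt.2 (le_sup' s hi)).trans_lt ?_
  have := card_le_univ C
  simp only [Fintype.card_fin] at this
  omega

end SortedPositions

lemma seqSorted_mem_Icc {n : ℕ} (s : Fin n → ℝ) {C : Finset (Fin n)} (hC : C.Nonempty)
    {k : ℕ} (hlo : n - #C ≤ k) (hhi : k < #C) :
    C.inf' hC s ≤ seqSorted s k ∧ seqSorted s k ≤ C.sup' hC s := by
  have hkn : k < n := hhi.trans_le (by simpa using card_le_univ C)
  rw [seqSorted, dif_pos hkn]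
  exact ⟨inf'_le_sort s hC hlo, sort_le_sup' s hC hhi⟩

theorem stmt0_general {n q : ℕ} (hq : q ≤ (n + 1) / 2 - 1)
    (s : Fin n → ℝ) (C : Finset (Fin n)) (hCne : C.Nonempty)
    (hCcard : n - q ≤ C.card) :
    (C.inf' hCne s ≤ seqSorted s ((n - 1) / 2) ∧
      seqSorted s ((n - 1) / 2) ≤ C.sup' hCne s) ∧
    (C.inf' hCne s ≤ seqSorted s (n / 2) ∧
      seqSorted s (n / 2) ≤ C.sup' hCne s) := by
  have hCpos := hCne.card_pos
  exact ⟨seqSorted_mem_Icc s hCne (by omega) (by omega),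
    seqSorted_mem_Icc s hCne (by omega) (by omega)⟩

/-- with at least `n - q` correct entries (indices in `C`),
`q ≤ ⌈n/2⌉ - 1`, the median (at position `⌊(n-1)/2⌋` and/or `⌈(n-1)/2⌉` of the
sorted sequence) lies between the min and max of the correct values. -/
theorem stmt0 {n q : ℕ} (hn : 1 ≤ n) (hq : q ≤ (n + 1) / 2 - 1)
    (s : Fin n → ℝ) (C : Finset (Fin n)) (hCne : C.Nonempty)
    (hCcard : n - q ≤ C.card) :
    (C.inf' hCne s ≤ seqSorted s ((n - 1) / 2) ∧
      seqSorted s ((n - 1) / 2) ≤ C.sup' hCne s) ∧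
    (C.inf' hCne s ≤ seqSorted s (n / 2) ∧
      seqSorted s (n / 2) ≤ C.sup' hCne s) :=
  stmt0_general hq s C hCne hCcard
end

section
/- Let n be odd, and let s : Fin n → ℝ contain at most q Byzantine entries with 2q < n, the remaining entries being correct values. Then on each side of the median in the sorted order there is at least one correct value; consequently the median lies in the closed interval [min of correct values, max of correct values]. -/
open Finset

namespace Tuple

variable {α : Type*} [LinearOrder α] {n : ℕ} (f : Fin n → α) (B : Finset (Fin n)) (k : Fin n)

theorem exists_notMem_le_sort (hB : #B ≤ k) : ∃ i ∉ B, f i ≤ f (sort f k) := by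
  have hcard : #B < #((Iic k).map (sort f).toEmbedding) := by
    rw [card_map, Fin.card_Iic]
    omega
  obtain ⟨i, hi, hiB⟩ := exists_mem_notMem_of_card_lt_card hcard
  obtain ⟨j, hjk, rfl⟩ := mem_map.mp hi
  exact ⟨_, hiB, monotone_sort f (mem_Iic.mp hjk)⟩

theorem exists_notMem_sort_le (hB : #B < n - k) : ∃ j ∉ B, f (sort f k) ≤ f j := by
  have hcard : #B < #((Ici k).map (sort f).toEmbedding) := by
    rwa [card_map, Fin.card_Ici]
  obtain ⟨i, hi, hiB⟩ := exists_mem_notMem_of_card_lt_card hcard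
  obtain ⟨j, hkj, rfl⟩ := mem_map.mp hi
  exact ⟨_, hiB, monotone_sort f (mem_Ici.mp hkj)⟩

end Tuple

theorem seqSorted_of_lt {n k : ℕ} (s : Fin n → ℝ) (hk : k < n) :
    seqSorted s k = s (Tuple.sort s ⟨k, hk⟩) :=
  dif_pos hk

/-- for `n` odd and a Byzantine index set `B` with `|B| ≤ q`, `2q < n`,
on each side of the median (rank `(n-1)/2`) there is a correct value; hence the
median lies in `[min correct, max correct]`. -/
theorem stmt1 {n q : ℕ} (h2q : 2 * q < n)
    (s : Fin n → ℝ) (B : Finset (Fin n)) (hB : B.card ≤ q) :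
    (∃ i ∉ B, s i ≤ seqSorted s ((n - 1) / 2)) ∧
    (∃ j ∉ B, seqSorted s ((n - 1) / 2) ≤ s j) ∧
    seqSorted s ((n - 1) / 2) ∈
      Set.Icc ((Bᶜ : Finset (Fin n)).inf' (by
          rw [Finset.nonempty_iff_ne_empty]
          intro h
          have := Finset.card_compl (s := B) (α := Fin n)
          simp [h] at this
          omega) s)
        ((Bᶜ : Finset (Fin n)).sup' (by
          rw [Finset.nonempty_iff_ne_empty]
          intro h
          have := Finset.card_compl (s := B) (α := Fin n)
          simp [h] at this
          omega) s) := by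
  have hm : (n - 1) / 2 < n := by omega
  rw [seqSorted_of_lt s hm]
  obtain ⟨i, hiB, hi⟩ := Tuple.exists_notMem_le_sort s B ⟨_, hm⟩ (by simp only; omega)
  obtain ⟨j, hjB, hj⟩ := Tuple.exists_notMem_sort_le s B ⟨_, hm⟩ (by simp only; omega)
  exact ⟨⟨i, hiB, hi⟩, ⟨j, hjB, hj⟩,
    (inf'_le _ (mem_compl.mpr hiB)).trans hi, hj.trans (le_sup' _ (mem_compl.mpr hjB))⟩
end

section
/- The averaging aggregation rule is not dimensional Byzantine resilient: there exist vectors ṽ_1, …, ṽ_n ∈ ℝ^d with at most 1 Byzantine value per dimension relative to correct vectors v_1, …, v_n with common mean g ≠ 0, such that the average (1/n)Σ ṽ_i has negative inner product with g. Specifically, if ṽ_i = v_i for i < n and ṽ_n = -g - Σ_{i=1}^{n-1} v_i, then E[(1/n)Σ ṽ_i] = -g/n and ⟨E[(1/n)Σ ṽ_i], g⟩ = -‖g‖²/n < 0. -/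
open MeasureTheory

/- The Byzantine vector is chosen so that the sum of all submitted vectors is the constant `-g`,
whatever the correct vectors are; hence the average is the constant `-g/n`, pointing against `g`. -/

theorem Finset.sum_eq_of_eq_sub_sum_erase {ι M : Type*} [Fintype ι] [DecidableEq ι]
    [AddCommGroup M] {f h : ι → M} {j : ι} {c : M} (hne : ∀ i, i ≠ j → f i = h i)
    (hj : f j = c - ∑ i ∈ univ.erase j, h i) : ∑ i, f i = c := by
  have hrest : ∑ i ∈ univ.erase j, f i = ∑ i ∈ univ.erase j, h i :=
    sum_congr rfl fun i hi => hne i (ne_of_mem_erase hi)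
  rw [← add_sum_erase _ _ (mem_univ j), hj, hrest, sub_add_cancel]

theorem real_inner_neg_inv_smul_self_left {E : Type*} [NormedAddCommGroup E]
    [InnerProductSpace ℝ E] (c : ℝ) (g : E) : inner ℝ (-(c⁻¹ • g)) g = -(‖g‖ ^ 2 / c) := by
  rw [inner_neg_left, real_inner_smul_left, real_inner_self_eq_norm_sq, inv_mul_eq_div]

theorem stmt10_general {Ω : Type*} [MeasurableSpace Ω] (P : Measure Ω)
    [IsProbabilityMeasure P] {n d : ℕ} (hn : 0 < n)
    (v : Fin n → Ω → EuclideanSpace ℝ (Fin d))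
    (g : EuclideanSpace ℝ (Fin d)) (hg : g ≠ 0)
    (last : Fin n)
    (tv : Fin n → Ω → EuclideanSpace ℝ (Fin d))
    (htv1 : ∀ i, i ≠ last → tv i = v i)
    (htv2 : ∀ ω, tv last ω = -g - ∑ i ∈ Finset.univ.erase last, v i ω) :
    (∫ ω, (n : ℝ)⁻¹ • ∑ i, tv i ω ∂P) = -((n : ℝ)⁻¹ • g) ∧
    (inner ℝ (∫ ω, (n : ℝ)⁻¹ • ∑ i, tv i ω ∂P) g : ℝ) = -(‖g‖ ^ 2 / n) ∧
    (inner ℝ (∫ ω, (n : ℝ)⁻¹ • ∑ i, tv i ω ∂P) g : ℝ) < 0 := by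
  have hsum (ω : Ω) : ∑ i, tv i ω = -g :=
    Finset.sum_eq_of_eq_sub_sum_erase (fun i hi => congrFun (htv1 i hi) ω) (htv2 ω)
  have hmean : (∫ ω, (n : ℝ)⁻¹ • ∑ i, tv i ω ∂P) = -((n : ℝ)⁻¹ • g) := by
    simp only [hsum, integral_const, probReal_univ, one_smul, smul_neg]
  have hinner := real_inner_neg_inv_smul_self_left (n : ℝ) g
  have hpos : 0 < ‖g‖ ^ 2 / n := by positivity
  rw [hmean, hinner]
  exact ⟨rfl, rfl, neg_neg_of_pos hpos⟩

/-- averaging is not dimensional Byzantine resilient.  If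
`ṽᵢ = vᵢ` for `i < n` and `ṽₙ = -g - Σ_{i<n} vᵢ` (one Byzantine value per
dimension), then `E[(1/n)Σ ṽᵢ] = -g/n` and `⟨E[(1/n)Σ ṽᵢ], g⟩ = -‖g‖²/n < 0`. -/
theorem stmt10 {Ω : Type*} [MeasurableSpace Ω] (P : Measure Ω)
    [IsProbabilityMeasure P] {n d : ℕ} (hn : 0 < n)
    (v : Fin n → Ω → EuclideanSpace ℝ (Fin d))
    (hint : ∀ i, Integrable (v i) P)
    (g : EuclideanSpace ℝ (Fin d)) (hg : g ≠ 0)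
    (hmean : ∀ i, ∫ ω, v i ω ∂P = g)
    (last : Fin n) (hlast : (last : ℕ) = n - 1)
    (tv : Fin n → Ω → EuclideanSpace ℝ (Fin d))
    (htv1 : ∀ i, i ≠ last → tv i = v i)
    (htv2 : ∀ ω, tv last ω = -g - ∑ i ∈ Finset.univ.erase last, v i ω) :
    (∫ ω, (n : ℝ)⁻¹ • ∑ i, tv i ω ∂P) = -((n : ℝ)⁻¹ • g) ∧
    (inner ℝ (∫ ω, (n : ℝ)⁻¹ • ∑ i, tv i ω ∂P) g : ℝ) = -(‖g‖ ^ 2 / n) ∧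
    (inner ℝ (∫ ω, (n : ℝ)⁻¹ • ∑ i, tv i ω ∂P) g : ℝ) < 0 :=
  stmt10_general P hn v g hg last tv htv1 htv2
end

section
/- Any aggregation rule that always outputs one of its input vectors fails dimensional Byzantine resilience with q = 1: for any g ≠ 0 in ℝ^n (taking d = n) and any M > 0, there exist vectors ṽ_1, …, ṽ_n ∈ ℝ^n, each differing from a correct vector v_i (with E[v_i] = g) in exactly one coordinate (the i-th coordinate of ṽ_i), such that every ṽ_i satisfies ⟨ṽ_i, g⟩ < -M. -/
/-! Changing the `i`-th coordinate of `v` by `t` changes `⟪v, w⟫` by `t * w i`; since `w i ≠ 0`,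
a single coordinate can push the inner product below any bound. -/

open Function

namespace EuclideanSpace

variable {ι : Type*} [DecidableEq ι]

theorem toLp_update_eq_add_smul_single (v : EuclideanSpace ℝ ι) (i : ι) (x : ℝ) :
    WithLp.toLp 2 (update v i x) = v + (x - v i) • EuclideanSpace.single i 1 := by
  ext j
  by_cases hj : j = i
  · subst hj
    simp
  · simp [hj]

theorem inner_toLp_update_left [Fintype ι] (v w : EuclideanSpace ℝ ι) (i : ι) (x : ℝ) :
    inner ℝ (WithLp.toLp 2 (update v i x)) w = inner ℝ v w + (x - v i) * w i := by
  rw [toLp_update_eq_add_smul_single, inner_add_left, real_inner_smul_left,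
    EuclideanSpace.inner_single_left]
  simp

theorem exists_ne_inner_toLp_update_lt [Fintype ι] (v w : EuclideanSpace ℝ ι) {i : ι}
    (hw : w i ≠ 0) (y M : ℝ) : ∃ x, x ≠ y ∧ inner ℝ (WithLp.toLp 2 (update v i x)) w < M := by
  set A := inner ℝ (WithLp.toLp 2 (update v i y)) w
  have hpos : 0 < |A - M| + 1 := by positivity
  refine ⟨y - (|A - M| + 1) / w i, ?_, ?_⟩
  · simpa [sub_eq_self] using div_ne_zero hpos.ne' hw
  · have hA : A = inner ℝ v w + (y - v i) * w i := inner_toLp_update_left v w i y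
    rw [inner_toLp_update_left]
    have hstep : (y - (|A - M| + 1) / w i - v i) * w i = (y - v i) * w i - (|A - M| + 1) := by
      field_simp
      ring
    rw [hstep]
    linarith [le_abs_self (A - M)]

end EuclideanSpace

theorem stmt11_general {n : ℕ} (g : EuclideanSpace ℝ (Fin n)) (hg : ∀ i, g i ≠ 0)
    (M : ℝ) :
    ∃ tv : Fin n → EuclideanSpace ℝ (Fin n),
      (∀ i j, j ≠ i → tv i j = g j) ∧
      (∀ i, tv i i ≠ g i) ∧
      (∀ i, (inner ℝ (tv i) g : ℝ) < -M) := by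
  choose x hx_ne hx_lt using
    fun i => EuclideanSpace.exists_ne_inner_toLp_update_lt g g (hg i) (g i) (-M)
  refine ⟨fun i => WithLp.toLp 2 (update g i (x i)), fun i j hj => update_of_ne hj _ _,
    fun i => ?_, hx_lt⟩
  simpa using hx_ne i

/-- any aggregation rule outputting one of its inputs fails
dimensional Byzantine resilience with `q = 1`: for `g` with all coordinates
nonzero and any `M > 0`, there are vectors `ṽᵢ`, each equal to the correct
vector `g` except in its `i`-th coordinate, such that `⟨ṽᵢ, g⟩ < -M` for all `i`. -/
theorem stmt11 {n : ℕ} (g : EuclideanSpace ℝ (Fin n)) (hg : ∀ i, g i ≠ 0)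
    (M : ℝ) (hM : 0 < M) :
    ∃ tv : Fin n → EuclideanSpace ℝ (Fin n),
      (∀ i j, j ≠ i → tv i j = g j) ∧
      (∀ i, tv i i ≠ g i) ∧
      (∀ i, (inner ℝ (tv i) g : ℝ) < -M) :=
  stmt11_general g hg M
end

section
/- Let z_1, …, z_n be points in a real Hilbert space and let z_* be the exact geometric median, i.e., z_* minimizes z ↦ Σ_{i=1}^n ‖z - z_i‖. Suppose q < n/2 and at least n - q of the points satisfy ‖z_i‖ ≤ r. Then ‖z_*‖ ≤ (2n - 2q)/(n - 2q) · r. -/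
/-!
Comparing `z⋆` with the origin, the triangle inequality bounds each term
`‖z⋆ - zᵢ‖ - ‖zᵢ‖` below by `‖z⋆‖ - 2r` for a point in the ball and by `-‖z⋆‖` for any
other point. Summing over `m` points of the ball and the remaining `n - m` points gives
`(2m - n)‖z⋆‖ - 2mr ≤ 0`; it suffices to take `m = n - q` points of the ball.
-/

open Finset

theorem mul_norm_le_of_sum_norm_sub_le_sum_norm {ι E : Type*} [Fintype ι]
    [SeminormedAddCommGroup E] (z : ι → E) (x : E)
    (hx : ∑ i, ‖x - z i‖ ≤ ∑ i, ‖z i‖) (s : Finset ι) (r : ℝ)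
    (hs : ∀ i ∈ s, ‖z i‖ ≤ r) :
    (2 * (#s : ℝ) - Fintype.card ι) * ‖x‖ ≤ 2 * #s * r := by
  classical
  have hterm : ∑ _i ∈ s, (‖x‖ - 2 * r) + ∑ _i ∈ sᶜ, -‖x‖ ≤ ∑ i, (‖x - z i‖ - ‖z i‖) := by
    rw [← sum_add_sum_compl s]
    refine add_le_add (sum_le_sum fun i hi => ?_) (sum_le_sum fun i _ => ?_)
    · linarith [norm_sub_norm_le x (z i), hs i hi]
    · linarith [norm_sub_norm_le (z i) x, norm_sub_rev x (z i)]
  have hnonpos : ∑ i, (‖x - z i‖ - ‖z i‖) ≤ 0 := by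
    rw [sum_sub_distrib]
    linarith
  simp only [sum_const, card_compl, nsmul_eq_mul, Nat.cast_sub (card_le_univ s)] at hterm
  linarith

theorem stmt12_general {H : Type*} [NormedAddCommGroup H]
    {n q : ℕ} (h2q : 2 * q < n)
    (z : Fin n → H) (zs : H)
    (hmin : ∀ y : H, ∑ i, ‖zs - z i‖ ≤ ∑ i, ‖y - z i‖)
    (r : ℝ) (C : Finset (Fin n)) (hCcard : n - q ≤ C.card)
    (hCr : ∀ i ∈ C, ‖z i‖ ≤ r) :
    ‖zs‖ ≤ (2 * (n : ℝ) - 2 * (q : ℝ)) / ((n : ℝ) - 2 * (q : ℝ)) * r := by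
  obtain ⟨D, hDC, hDcard⟩ := exists_subset_card_eq hCcard
  have hbound := mul_norm_le_of_sum_norm_sub_le_sum_norm z zs (by simpa using hmin 0) D r
    fun i hi => hCr i (hDC hi)
  rw [hDcard, Fintype.card_fin, Nat.cast_sub (by omega)] at hbound
  have hq : (2 * q : ℝ) < n := by exact_mod_cast h2q
  rw [div_mul_eq_mul_div, le_div_iff₀ (by linarith)]
  linarith

/-- if `z⋆` is an exact geometric median of `z₁, …, zₙ` in a real
Hilbert space, `q < n/2`, and at least `n - q` of the points satisfy `‖zᵢ‖ ≤ r`,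
then `‖z⋆‖ ≤ (2n - 2q)/(n - 2q) · r`. -/
theorem stmt12 {H : Type*} [NormedAddCommGroup H] [InnerProductSpace ℝ H]
    [CompleteSpace H] {n q : ℕ} (h2q : 2 * q < n)
    (z : Fin n → H) (zs : H)
    (hmin : ∀ y : H, ∑ i, ‖zs - z i‖ ≤ ∑ i, ‖y - z i‖)
    (r : ℝ) (C : Finset (Fin n)) (hCcard : n - q ≤ C.card)
    (hCr : ∀ i ∈ C, ‖z i‖ ≤ r) :
    ‖zs‖ ≤ (2 * (n : ℝ) - 2 * (q : ℝ)) / ((n : ℝ) - 2 * (q : ℝ)) * r :=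
  stmt12_general h2q z zs hmin r C hCcard hCr
end

section
/- Let H be a real Hilbert space, z_1, …, z_n ∈ H, and let z_* satisfy Σ_i ‖z_* - z_i‖ ≤ (1+ε)·min_z Σ_i ‖z - z_i‖ for some ε ≥ 0 (a (1+ε)-approximate geometric median). Suppose q/n ∈ (0, 1/2) and at least (1 - q/n)·n of the z_i satisfy ‖z_i‖ ≤ r. Then ‖z_*‖ ≤ ((2n-2q)/(n-2q))·r + ε·(min_z Σ_i ‖z - z_i‖)/(n - 2q). -/
/-!
Compare `z⋆` with the origin. For a good index (`‖zᵢ‖ ≤ r`) the triangle inequality gives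
`‖z⋆‖ + ‖zᵢ‖ - ‖z⋆ - zᵢ‖ ≤ 2r`, for a bad one `‖zᵢ‖ - ‖z⋆ - zᵢ‖ ≤ ‖z⋆‖`. Summing, with `c ≥ n - q`
good indices, `(2c - n)‖z⋆‖ ≤ 2cr + Σᵢ ‖z⋆ - zᵢ‖ - Σᵢ ‖zᵢ‖ ≤ 2cr + εM`, because `Σᵢ ‖zᵢ‖` is the
objective at `0` and hence at least `M`. The bound `(2cr + εM)/(2c - n)` decreases in `c`, so
`c = n - q` is the worst case.
-/

open Finset

theorem two_mul_card_sub_card_mul_norm_le {ι E : Type*} [Fintype ι] [DecidableEq ι]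
    [SeminormedAddCommGroup E]
    (z : ι → E) (x : E) {C : Finset ι} {r : ℝ} (hC : ∀ i ∈ C, ‖z i‖ ≤ r) :
    (2 * #C - Fintype.card ι : ℝ) * ‖x‖ ≤ 2 * #C * r + (∑ i, ‖x - z i‖ - ∑ i, ‖z i‖) := by
  have good : ∑ i ∈ C, (‖x‖ + ‖z i‖ - ‖x - z i‖) ≤ ∑ _i ∈ C, 2 * r :=
    sum_le_sum fun i hi => by
      linarith [norm_sub_norm_le x (z i), hC i hi]
  have bad : ∑ i ∈ Cᶜ, (‖z i‖ - ‖x - z i‖) ≤ ∑ _i ∈ Cᶜ, ‖x‖ :=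
    sum_le_sum fun i _ => by
      linarith [norm_sub_norm_le (z i) x, norm_sub_rev (z i) x]
  have hcard : (#Cᶜ : ℝ) = Fintype.card ι - #C := by
    rw [card_compl, Nat.cast_sub (card_le_univ C)]
  simp only [sum_sub_distrib, sum_add_distrib, sum_const, nsmul_eq_mul, hcard] at good bad
  rw [← sum_add_sum_compl C fun i => ‖x - z i‖, ← sum_add_sum_compl C fun i => ‖z i‖]
  linarith

theorem iInf_sum_norm_sub_le {ι E : Type*} [Fintype ι] [SeminormedAddCommGroup E]
    (z : ι → E) (x : E) : ⨅ y, ∑ i, ‖y - z i‖ ≤ ∑ i, ‖x - z i‖ :=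
  ciInf_le ⟨0, by rintro _ ⟨y, rfl⟩; positivity⟩ x

theorem le_div_mul_add_div_of_two_mul_sub_mul_le {n q c r t e : ℝ} (hq : 0 ≤ q)
    (hnq : 0 < n - 2 * q)
    (hc : n - q ≤ c) (hr : 0 ≤ r) (he : 0 ≤ e)
    (h : (2 * c - n) * t ≤ 2 * c * r + e) :
    t ≤ (2 * n - 2 * q) / (n - 2 * q) * r + e / (n - 2 * q) := by
  rw [div_mul_eq_mul_div, ← add_div, le_div_iff₀ hnq]
  have hk : n - 2 * q ≤ 2 * c - n := by linarith
  refine le_of_mul_le_mul_left ?_ (hnq.trans_le hk)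
  calc (2 * c - n) * (t * (n - 2 * q)) = (n - 2 * q) * ((2 * c - n) * t) := by ring
    _ ≤ (n - 2 * q) * (2 * c * r + e) := mul_le_mul_of_nonneg_left h hnq.le
    _ = (2 * c - n) * ((2 * n - 2 * q) * r + e)
          - (2 * n * (c - (n - q)) * r + (2 * c - n - (n - 2 * q)) * e) := by ring
    _ ≤ (2 * c - n) * ((2 * n - 2 * q) * r + e) := by
      have : 0 ≤ n := by linarith
      have : 0 ≤ c - (n - q) := by linarith
      have : 0 ≤ 2 * c - n - (n - 2 * q) := by linarith
      have : 0 ≤ 2 * n * (c - (n - q)) * r + (2 * c - n - (n - 2 * q)) * e := by positivity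
      linarith

theorem stmt19_general {H : Type*} [NormedAddCommGroup H] {n q : ℕ} (h2q : 2 * q < n)
    (ε : ℝ)
    (z : Fin n → H) (zs : H)
    (hzs : ∑ i, ‖zs - z i‖ ≤ (1 + ε) * ⨅ y : H, ∑ i, ‖y - z i‖)
    (r : ℝ) (C : Finset (Fin n)) (hCcard : n - q ≤ C.card)
    (hCr : ∀ i ∈ C, ‖z i‖ ≤ r) :
    ‖zs‖ ≤ (2 * (n : ℝ) - 2 * (q : ℝ)) / ((n : ℝ) - 2 * (q : ℝ)) * r +
      ε * (⨅ y : H, ∑ i, ‖y - z i‖) / ((n : ℝ) - 2 * (q : ℝ)) := by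
  set M := ⨅ y : H, ∑ i, ‖y - z i‖
  have hM_zs : M ≤ ∑ i, ‖zs - z i‖ := iInf_sum_norm_sub_le z zs
  have hM_zero : M ≤ ∑ i, ‖z i‖ := by simpa using iInf_sum_norm_sub_le z 0
  have hεM : 0 ≤ ε * M := by linarith
  obtain ⟨i₀, hi₀⟩ : C.Nonempty := card_pos.1 (by omega : 0 < #C)
  have hcard : (n : ℝ) - q ≤ #C := by
    rw [← Nat.cast_sub (by omega)]
    exact_mod_cast hCcard
  have hkey := two_mul_card_sub_card_mul_norm_le z zs hCr
  rw [Fintype.card_fin] at hkey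
  refine le_div_mul_add_div_of_two_mul_sub_mul_le q.cast_nonneg
    (sub_pos.2 (by exact_mod_cast h2q)) hcard
    ((norm_nonneg _).trans (hCr i₀ hi₀)) hεM (by linarith)

/-- if `z⋆` is a `(1+ε)`-approximate geometric median of
`z₁, …, zₙ` in a real Hilbert space, `q/n ∈ (0, 1/2)`, and at least `n - q` of
the points satisfy `‖zᵢ‖ ≤ r`, then
`‖z⋆‖ ≤ (2n-2q)/(n-2q)·r + ε·M/(n-2q)` where `M = min_z Σᵢ ‖z - zᵢ‖`. -/
theorem stmt19 {H : Type*} [NormedAddCommGroup H] [InnerProductSpace ℝ H]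
    [CompleteSpace H] {n q : ℕ} (hq : 0 < q) (h2q : 2 * q < n)
    (ε : ℝ) (hε : 0 ≤ ε)
    (z : Fin n → H) (zs : H)
    (hzs : ∑ i, ‖zs - z i‖ ≤ (1 + ε) * ⨅ y : H, ∑ i, ‖y - z i‖)
    (r : ℝ) (C : Finset (Fin n)) (hCcard : n - q ≤ C.card)
    (hCr : ∀ i ∈ C, ‖z i‖ ≤ r) :
    ‖zs‖ ≤ (2 * (n : ℝ) - 2 * (q : ℝ)) / ((n : ℝ) - 2 * (q : ℝ)) * r +
      ε * (⨅ y : H, ∑ i, ‖y - z i‖) / ((n : ℝ) - 2 * (q : ℝ)) :=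
  stmt19_general h2q ε z zs hzs r C hCcard hCr
end
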